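/- Let G be a finite simple graph and let Ḡ be its complement. Then the star numbers of G and Ḡ differ by at most 1, i.e., |γ(Ḡ) − γ(G)| ≤ 1. -/

import Mathlib

open SimpleGraph

/-- A `k`-witness for a simple graph `G`: a positive weight function `w` on the vertices
together with `k` increasingly ordered intervals `[a i, b i]` of positive reals such that
two distinct vertices are adjacent iff the sum of their weights lies in ⋃ i, [a i, b i]. -/
structure StarWitness {V : Type*} (G : SimpleGraph V) (k : ℕ) where
  w : V → ℝ
  a : Fin k → ℝ
  b : Fin k → ℝ
  w_pos : ∀ v, 0 < w v
  a_pos : ∀ i, 0 < a i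
  a_le_b : ∀ i, a i ≤ b i
  ordered : ∀ i j : Fin k, i < j → b i < a j
  adj_iff : ∀ u v : V, u ≠ v →
    (G.Adj u v ↔ ∃ i : Fin k, a i ≤ w u + w v ∧ w u + w v ≤ b i)

/-- The star number `γ(G)` of a graph `G`: the smallest positive integer `k` such that
`G` admits a `k`-witness (i.e. `G` is a star-`k`-PCG). -/
noncomputable def starNumber {V : Type*} (G : SimpleGraph V) : ℕ :=
  sInf {k | 0 < k ∧ Nonempty (StarWitness G k)}

/-- A witness is left-free if the weight of every non-edge exceeds `b 1` (the right endpoint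
of the first interval). -/
def StarWitness.LeftFree {V : Type*} {G : SimpleGraph V} {k : ℕ}
    (W : StarWitness G k) : Prop :=
  ∀ u v : V, u ≠ v → ¬ G.Adj u v → ∀ i : Fin k, (i : ℕ) = 0 → W.b i < W.w u + W.w v

/-- A witness is right-free if the weight of every non-edge is below `a k` (the left endpoint
of the last interval). -/
def StarWitness.RightFree {V : Type*} {G : SimpleGraph V} {k : ℕ}
    (W : StarWitness G k) : Prop :=
  ∀ u v : V, u ≠ v → ¬ G.Adj u v → ∀ i : Fin k, (i : ℕ) = k - 1 → W.w u + W.w v < W.a i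

/-- A witness is in normal form if all weights are pairwise distinct and no doubled weight
equals the sum of the weights of two distinct vertices. -/
def StarWitness.NormalForm {V : Type*} {G : SimpleGraph V} {k : ℕ}
    (W : StarWitness G k) : Prop :=
  Function.Injective W.w ∧
    ∀ x u₁ u₂ : V, u₁ ≠ u₂ → 2 * W.w x ≠ W.w u₁ + W.w u₂

lemma pow3_lt {i j q : ℕ} (hij : i ≤ j) (hjq : j < q) : 3^i + 3^j < 3^q := by
  have h1 : (3:ℕ)^i ≤ 3^j := Nat.pow_le_pow_right (by norm_num) hij
  have h2 : (3:ℕ)^(j+1) ≤ 3^q := Nat.pow_le_pow_right (by norm_num) hjq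
  have h3 : (3:ℕ)^(j+1) = 3 * 3^j := by ring
  have h4 : 0 < (3:ℕ)^j := Nat.pow_pos (by norm_num)
  omega

lemma pow3_add {i j p q : ℕ} (hij : i ≤ j) (hpq : p ≤ q) (h : 3^i + 3^j = 3^p + 3^q) :
    i = p ∧ j = q := by
  have hjq : j = q := by
    by_contra hne
    rcases Nat.lt_or_ge j q with hlt | hge
    · have := pow3_lt hij hlt
      have h0 : 0 < (3:ℕ)^p := Nat.pow_pos (by norm_num)
      omega
    · have hqj : q < j := by omega
      have := pow3_lt hpq hqj
      have h0 : 0 < (3:ℕ)^i := Nat.pow_pos (by norm_num)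
      omega
  subst hjq
  have : (3:ℕ)^i = 3^p := by omega
  exact ⟨Nat.pow_right_injective (by norm_num) this, rfl⟩

lemma pow3_add' {i j p q : ℕ} (h : 3^i + 3^j = 3^p + 3^q) :
    (i = p ∧ j = q) ∨ (i = q ∧ j = p) := by
  rcases Nat.le_total i j with hij | hji <;> rcases Nat.le_total p q with hpq | hqp
  · exact Or.inl (pow3_add hij hpq h)
  · have := pow3_add hij hqp (by omega)
    exact Or.inr ⟨this.1, this.2⟩
  · have := pow3_add hji hpq (by omega)
    exact Or.inr ⟨this.2, this.1⟩
  · have := pow3_add hji hqp (by omega)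
    exact Or.inl ⟨this.2, this.1⟩

lemma exists_starWitness {V : Type*} [Fintype V] (G : SimpleGraph V) :
    ∃ k, 0 < k ∧ Nonempty (StarWitness G k) := by
  classical
  set e : V → ℕ := fun v => (Fintype.equivFin V v : ℕ) with he
  have he_inj : Function.Injective e := fun u v h => by
    have := Fin.val_injective h
    exact (Fintype.equivFin V).injective this
  set w : V → ℝ := fun v => (3:ℝ) ^ (e v) with hw
  have hw_pos : ∀ v, 0 < w v := fun v => by positivity
  have hw_cast : ∀ v, w v = ((3 ^ (e v) : ℕ) : ℝ) := fun v => by push_cast; rfl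
  -- key: sum determines the unordered pair
  have hsum : ∀ u v x y : V, w u + w v = w x + w y →
      (u = x ∧ v = y) ∨ (u = y ∧ v = x) := by
    intro u v x y h
    rw [hw_cast, hw_cast, hw_cast, hw_cast] at h
    have h' : 3 ^ e u + 3 ^ e v = 3 ^ e x + 3 ^ e y := by exact_mod_cast h
    rcases pow3_add' h' with ⟨h1, h2⟩ | ⟨h1, h2⟩
    · exact Or.inl ⟨he_inj h1, he_inj h2⟩
    · exact Or.inr ⟨he_inj h1, he_inj h2⟩
  set P : Finset (V × V) := Finset.univ.filter (fun p => G.Adj p.1 p.2) with hP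
  set T : Finset ℝ := P.image (fun p => w p.1 + w p.2) with hT
  have hTmem : ∀ s ∈ T, 0 < s ∧ ∃ x y, G.Adj x y ∧ s = w x + w y := by
    intro s hs
    rw [hT, Finset.mem_image] at hs
    obtain ⟨p, hp, rfl⟩ := hs
    rw [hP, Finset.mem_filter] at hp
    exact ⟨by have := hw_pos p.1; have := hw_pos p.2; linarith,
      p.1, p.2, hp.2, rfl⟩
  have hwge : ∀ v, 1 ≤ w v := by
    intro v
    have h30 : (3:ℝ)^(0:ℕ) ≤ 3 ^ (e v) := by
      apply pow_le_pow_right₀ (by norm_num) (Nat.zero_le _)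
    simpa using h30
  by_cases hcard : T.card = 0
  · -- no edges
    refine ⟨1, one_pos, ⟨⟨w, fun _ => 1, fun _ => 1, hw_pos, fun _ => one_pos,
      fun _ => le_refl _, fun i j hij => absurd (Fin.le_of_lt hij) (by omega), ?_⟩⟩⟩
    intro u v huv
    constructor
    · intro hadj
      exfalso
      have : w u + w v ∈ T := by
        rw [hT, Finset.mem_image]
        exact ⟨(u, v), by rw [hP, Finset.mem_filter]; exact ⟨Finset.mem_univ _, hadj⟩, rfl⟩
      rw [Finset.card_eq_zero] at hcard
      simp [hcard] at this
    · rintro ⟨i, h1, h2⟩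
      exfalso
      have := hwge u; have := hwge v
      linarith
  · have hcard' : 0 < T.card := Nat.pos_of_ne_zero hcard
    set f := T.orderIsoOfFin (rfl : T.card = T.card) with hf
    refine ⟨T.card, hcard', ⟨⟨w, fun i => (f i : ℝ), fun i => (f i : ℝ), hw_pos, ?_, ?_, ?_, ?_⟩⟩⟩
    · intro i
      exact (hTmem _ (f i).2).1
    · intro i; exact le_refl _
    · intro i j hij
      exact_mod_cast (f.lt_iff_lt).2 hij
    · intro u v huv
      constructor
      · intro hadj
        have hmem : w u + w v ∈ T := by
          rw [hT, Finset.mem_image]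
          exact ⟨(u, v), by rw [hP, Finset.mem_filter]; exact ⟨Finset.mem_univ _, hadj⟩, rfl⟩
        obtain ⟨i, hi⟩ := f.surjective ⟨_, hmem⟩
        exact ⟨i, by simp [hi], by simp [hi]⟩
      · rintro ⟨i, h1, h2⟩
        have hs : w u + w v = (f i : ℝ) := le_antisymm h2 h1
        obtain ⟨-, x, y, hxy, hval⟩ := hTmem _ (f i).2
        rw [hval] at hs
        rcases hsum u v x y hs with ⟨rfl, rfl⟩ | ⟨rfl, rfl⟩
        · exact hxy
        · exact hxy.symm

lemma compl_starWitness {V : Type*} [Fintype V] (G : SimpleGraph V) {k : ℕ} (hk : 0 < k)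
    (W : StarWitness G k) : Nonempty (StarWitness Gᶜ (k + 1)) := by
  classical
  set A : ℕ → ℝ := fun n => if h : n < k then W.a ⟨n, h⟩ else 0 with hA
  set B : ℕ → ℝ := fun n => if h : n < k then W.b ⟨n, h⟩ else 0 with hB
  have hAeq : ∀ (n : ℕ) (h : n < k), A n = W.a ⟨n, h⟩ := fun n h => dif_pos h
  have hBeq : ∀ (n : ℕ) (h : n < k), B n = W.b ⟨n, h⟩ := fun n h => dif_pos h
  have hApos : ∀ n, n < k → 0 < A n := fun n h => by rw [hAeq n h]; exact W.a_pos _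
  have hAB : ∀ n, n < k → A n ≤ B n := fun n h => by
    rw [hAeq n h, hBeq n h]; exact W.a_le_b _
  have hord : ∀ m n, m < n → n < k → B m < A n := fun m n hmn hn => by
    rw [hBeq m (lt_trans hmn hn), hAeq n hn]
    exact W.ordered _ _ (by exact hmn)
  have hBpos : ∀ n, n < k → 0 < B n := fun n h => lt_of_lt_of_le (hApos n h) (hAB n h)
  have hBmono : ∀ m n, m ≤ n → n < k → B m ≤ B n := by
    intro m n hmn hn
    rcases eq_or_lt_of_le hmn with rfl | h
    · exact le_refl _
    · exact le_of_lt (lt_of_lt_of_le (hord m n h hn) (hAB n hn))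
  have hAmono : ∀ m n, m ≤ n → n < k → A m ≤ A n := by
    intro m n hmn hn
    rcases eq_or_lt_of_le hmn with rfl | h
    · exact le_refl _
    · exact le_of_lt (lt_of_le_of_lt (hAB m (lt_trans h hn)) (hord m n h hn))
  -- non-edge sums
  set T : Finset ℝ := (Finset.univ.filter
      (fun p : V × V => p.1 ≠ p.2 ∧ ¬ G.Adj p.1 p.2)).image (fun p => W.w p.1 + W.w p.2) with hT
  have hTpos : ∀ s ∈ T, 0 < s := by
    intro s hs
    rw [hT, Finset.mem_image] at hs
    obtain ⟨p, _, rfl⟩ := hs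
    have := W.w_pos p.1; have := W.w_pos p.2
    linarith
  have hTnotint : ∀ s ∈ T, ∀ j : Fin k, ¬ (W.a j ≤ s ∧ s ≤ W.b j) := by
    intro s hs j hj
    rw [hT, Finset.mem_image] at hs
    obtain ⟨p, hp, rfl⟩ := hs
    rw [Finset.mem_filter] at hp
    exact hp.2.2 ((W.adj_iff p.1 p.2 hp.2.1).2 ⟨j, hj⟩)
  -- the candidate set for ε
  set F : Finset ℝ :=
    insert (W.a ⟨0, hk⟩ / 2)
      ((((Finset.range (k-1)).image (fun n => (A (n+1) - B n)/2)) ∪ T)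
        ∪ ((T ×ˢ (Finset.univ : Finset (Fin k))).image (fun p => |p.1 - W.a p.2|)
          ∪ (T ×ˢ (Finset.univ : Finset (Fin k))).image (fun p => |p.1 - W.b p.2|))) with hF
  have hFne : F.Nonempty := ⟨_, Finset.mem_insert_self _ _⟩
  have hFpos : ∀ x ∈ F, 0 < x := by
    intro x hx
    rw [hF] at hx
    simp only [Finset.mem_insert, Finset.mem_union, Finset.mem_image, Finset.mem_range,
      Finset.mem_product, Finset.mem_univ, and_true] at hx
    rcases hx with rfl | ((⟨n, hn, rfl⟩ | h) | (⟨p, hp, rfl⟩ | ⟨p, hp, rfl⟩))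
    · have := W.a_pos ⟨0, hk⟩; linarith
    · have := hord n (n+1) (Nat.lt_succ_self n) (by omega); linarith
    · exact hTpos _ h
    · rw [abs_pos, sub_ne_zero]
      intro hcon
      exact hTnotint _ hp p.2 ⟨le_of_eq hcon.symm, by rw [hcon]; exact W.a_le_b p.2⟩
    · rw [abs_pos, sub_ne_zero]
      intro hcon
      exact hTnotint _ hp p.2 ⟨by rw [hcon]; exact W.a_le_b p.2, le_of_eq hcon⟩
  set ε : ℝ := F.min' hFne with hε
  have hεle : ∀ x ∈ F, ε ≤ x := fun x hx => Finset.min'_le _ _ hx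
  have hεpos : 0 < ε := hFpos _ (F.min'_mem hFne)
  -- specific consequences of ε being the minimum
  have hεa0 : 2 * ε ≤ A 0 := by
    have := hεle _ (Finset.mem_insert_self _ _)
    rw [hAeq 0 hk]; linarith
  have hεgap : ∀ n, n + 1 < k → 2 * ε ≤ A (n+1) - B n := by
    intro n hn
    have hmem : (A (n+1) - B n)/2 ∈ F := by
      rw [hF]
      apply Finset.mem_insert_of_mem
      apply Finset.mem_union_left
      apply Finset.mem_union_left
      exact Finset.mem_image_of_mem _ (Finset.mem_range.2 (by omega))
    have := hεle _ hmem
    linarith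
  have hεT : ∀ s ∈ T, ε ≤ s := by
    intro s hs
    apply hεle
    rw [hF]
    apply Finset.mem_insert_of_mem
    exact Finset.mem_union_left _ (Finset.mem_union_right _ hs)
  have hεTa : ∀ s ∈ T, ∀ j : Fin k, ε ≤ |s - W.a j| := by
    intro s hs j
    apply hεle
    rw [hF]
    apply Finset.mem_insert_of_mem
    apply Finset.mem_union_right
    apply Finset.mem_union_left
    have hp : (s, j) ∈ T ×ˢ (Finset.univ : Finset (Fin k)) :=
      Finset.mem_product.2 ⟨hs, Finset.mem_univ _⟩
    exact Finset.mem_image_of_mem _ hp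
  have hεTb : ∀ s ∈ T, ∀ j : Fin k, ε ≤ |s - W.b j| := by
    intro s hs j
    apply hεle
    rw [hF]
    apply Finset.mem_insert_of_mem
    apply Finset.mem_union_right
    apply Finset.mem_union_right
    have hp : (s, j) ∈ T ×ˢ (Finset.univ : Finset (Fin k)) :=
      Finset.mem_product.2 ⟨hs, Finset.mem_univ _⟩
    exact Finset.mem_image_of_mem _ hp
  -- the right end
  set M : ℝ := (insert (B (k-1) + ε) T).max' ⟨_, Finset.mem_insert_self _ _⟩ with hM
  have hM1 : B (k-1) + ε ≤ M := Finset.le_max' _ _ (Finset.mem_insert_self _ _)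
  have hM2 : ∀ s ∈ T, s ≤ M := fun s hs =>
    Finset.le_max' _ _ (Finset.mem_insert_of_mem hs)
  -- the new intervals
  set a' : Fin (k+1) → ℝ := fun i => if (i : ℕ) = 0 then ε else B ((i : ℕ) - 1) + ε with ha'
  set b' : Fin (k+1) → ℝ := fun i => if h : (i : ℕ) < k then A (i : ℕ) - ε else M with hb'
  have ha'eq0 : ∀ i : Fin (k+1), (i : ℕ) = 0 → a' i = ε := by
    intro i hi; rw [ha']; simp [hi]
  have ha'eqpos : ∀ i : Fin (k+1), (i : ℕ) ≠ 0 → a' i = B ((i : ℕ) - 1) + ε := by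
    intro i hi; rw [ha']; simp [hi]
  have hb'eqlt : ∀ i : Fin (k+1), (i : ℕ) < k → b' i = A (i : ℕ) - ε := by
    intro i hi; rw [hb']; simp [hi]
  have hb'eqk : ∀ i : Fin (k+1), ¬ ((i : ℕ) < k) → b' i = M := by
    intro i hi; rw [hb']; simp [hi]
  -- membership in T for non-edges
  have hsT : ∀ u v : V, u ≠ v → ¬ G.Adj u v → W.w u + W.w v ∈ T := by
    intro u v huv hna
    rw [hT, Finset.mem_image]
    exact ⟨(u, v), Finset.mem_filter.2 ⟨Finset.mem_univ _, huv, hna⟩, rfl⟩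
  refine ⟨⟨W.w, a', b', W.w_pos, ?_, ?_, ?_, ?_⟩⟩
  · -- a_pos
    intro i
    by_cases hi : (i : ℕ) = 0
    · rw [ha'eq0 i hi]; exact hεpos
    · rw [ha'eqpos i hi]
      have hlt : (i : ℕ) - 1 < k := by have := i.isLt; omega
      have := hBpos _ hlt
      linarith
  · -- a_le_b
    intro i
    by_cases hi : (i : ℕ) = 0
    · rw [ha'eq0 i hi, hb'eqlt i (by omega)]
      have : A (i : ℕ) = A 0 := by rw [hi]
      rw [this]
      linarith
    · by_cases hik : (i : ℕ) < k
      · rw [ha'eqpos i hi, hb'eqlt i hik]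
        have hgap := hεgap ((i : ℕ) - 1) (by omega)
        have : (i : ℕ) - 1 + 1 = (i : ℕ) := by omega
        rw [this] at hgap
        linarith
      · rw [ha'eqpos i hi, hb'eqk i hik]
        have h1 : (i : ℕ) = k := by have := i.isLt; omega
        have h2 : (i : ℕ) - 1 = k - 1 := by omega
        rw [h2]
        exact hM1
  · -- ordered
    intro i j hij
    have hij' : (i : ℕ) < (j : ℕ) := hij
    have hjne : (j : ℕ) ≠ 0 := by omega
    have hik : (i : ℕ) < k := by have := j.isLt; omega
    rw [ha'eqpos j hjne, hb'eqlt i hik]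
    have hj1 : (j : ℕ) - 1 < k := by have := j.isLt; omega
    have h1 : A (i : ℕ) ≤ B ((j : ℕ) - 1) :=
      le_trans (hAmono _ _ (by omega) hj1) (hAB _ hj1)
    linarith
  · -- adj_iff
    intro u v huv
    rw [SimpleGraph.compl_adj]
    set s : ℝ := W.w u + W.w v with hs
    constructor
    · rintro ⟨-, hna⟩
      have hsT' : s ∈ T := hsT u v huv hna
      have hnotint : ∀ j : Fin k, ¬ (W.a j ≤ s ∧ s ≤ W.b j) := hTnotint _ hsT'
      by_cases hlast : B (k-1) < s
      · refine ⟨Fin.last k, ?_, ?_⟩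
        · rw [ha'eqpos (Fin.last k) (by simp [Fin.last]; omega)]
          have : ((Fin.last k : Fin (k+1)) : ℕ) - 1 = k - 1 := by simp [Fin.last]
          rw [this]
          have habs := hεTb s hsT' ⟨k-1, by omega⟩
          rw [← hBeq (k-1) (by omega)] at habs
          rw [abs_of_pos (by linarith)] at habs
          linarith
        · rw [hb'eqk (Fin.last k) (by simp [Fin.last])]
          exact hM2 _ hsT'
      · push_neg at hlast
        have hex : ∃ n, n < k ∧ s < A n := by
          refine ⟨k - 1, by omega, ?_⟩
          by_contra hcon
          push_neg at hcon
          exact hnotint ⟨k-1, by omega⟩ ⟨by rw [← hAeq _ (by omega : k-1 < k)]; exact hcon,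
            by rw [← hBeq _ (by omega : k-1 < k)]; exact hlast⟩
        set n := Nat.find hex with hn
        obtain ⟨hnk, hsA⟩ : n < k ∧ s < A n := Nat.find_spec hex
        refine ⟨⟨n, by omega⟩, ?_, ?_⟩
        · by_cases hn0 : n = 0
          · rw [ha'eq0 ⟨n, by omega⟩ hn0]
            exact hεT _ hsT'
          · rw [ha'eqpos ⟨n, by omega⟩ hn0]
            have hnm : ¬ (n - 1 < k ∧ s < A (n - 1)) := Nat.find_min hex (by omega)
            have hAles : A (n-1) ≤ s := by
              by_contra hcon
              exact hnm ⟨by omega, by linarith [not_le.1 hcon]⟩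
            have hBlt : B (n-1) < s := by
              by_contra hcon
              push_neg at hcon
              exact hnotint ⟨n-1, by omega⟩
                ⟨by rw [← hAeq _ (by omega : n-1 < k)]; exact hAles,
                 by rw [← hBeq _ (by omega : n-1 < k)]; exact hcon⟩
            have habs := hεTb s hsT' ⟨n-1, by omega⟩
            rw [← hBeq (n-1) (by omega)] at habs
            rw [abs_of_pos (by linarith)] at habs
            simp only
            linarith
        · rw [hb'eqlt ⟨n, by omega⟩ hnk]
          have habs := hεTa s hsT' ⟨n, hnk⟩
          rw [← hAeq n hnk] at habs
          rw [abs_of_neg (by linarith)] at habs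
          simp only
          linarith
    · rintro ⟨i, h1, h2⟩
      refine ⟨huv, ?_⟩
      intro hadj
      obtain ⟨j, hj1, hj2⟩ := (W.adj_iff u v huv).1 hadj
      rw [← hAeq j j.isLt] at hj1
      rw [← hBeq j j.isLt] at hj2
      rcases Nat.lt_or_ge (j : ℕ) (i : ℕ) with hlt | hge
      · have hine : (i : ℕ) ≠ 0 := by omega
        rw [ha'eqpos i hine] at h1
        have hBle : B (j : ℕ) ≤ B ((i : ℕ) - 1) :=
          hBmono _ _ (by omega) (by have := i.isLt; omega)
        linarith
      · have hik : (i : ℕ) < k := lt_of_le_of_lt hge j.isLt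
        rw [hb'eqlt i hik] at h2
        have hAle : A (i : ℕ) ≤ A (j : ℕ) := hAmono _ _ hge j.isLt
        linarith


lemma starNumber_spec {V : Type*} [Fintype V] (G : SimpleGraph V) :
    0 < starNumber G ∧ Nonempty (StarWitness G (starNumber G)) := by
  have hne : {k | 0 < k ∧ Nonempty (StarWitness G k)}.Nonempty := by
    obtain ⟨k, hk⟩ := exists_starWitness G
    exact ⟨k, hk⟩
  exact Nat.sInf_mem hne

lemma starNumber_le {V : Type*} (G : SimpleGraph V) {k : ℕ} (hk : 0 < k)
    (W : Nonempty (StarWitness G k)) : starNumber G ≤ k :=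
  Nat.sInf_le ⟨hk, W⟩

/-- Lemma 12: the star numbers of a graph and of its complement differ by at most 1. -/
theorem stmt_13 {V : Type*} [Fintype V] (G : SimpleGraph V) :
    |(starNumber Gᶜ : ℤ) - (starNumber G : ℤ)| ≤ 1 := by
  have h1 : starNumber Gᶜ ≤ starNumber G + 1 := by
    obtain ⟨hpos, ⟨W⟩⟩ := starNumber_spec G
    exact starNumber_le _ (by omega) (compl_starWitness G hpos W)
  have h2 : starNumber G ≤ starNumber Gᶜ + 1 := by
    obtain ⟨hpos, ⟨W⟩⟩ := starNumber_spec Gᶜ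
    have hW := compl_starWitness Gᶜ hpos W
    rw [compl_compl] at hW
    exact starNumber_le _ (by omega) hW
  rw [abs_le]
  omega
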